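/- For m = 2, the probability under the uniform distribution μ on the unit circle S¹ of the set {(x₁,x₂) ∈ S¹ : x₁² ≤ 1/√2 and x₂² ≤ 1/√2} equals K₂, and the constant c₂ = (2·2)^0 K₂/(1! · 2^{3/2} · Γ(2)) evaluates to −1/(2√2) + (√2/π) arcsin((1/2)^{1/4}). -/

import Mathlib

open Real MeasureTheory

/-- `K₂`: the probability, under the uniform distribution on the unit circle
(parametrized by angle), of the set `{x ∈ S¹ : x₁² ≤ √(1/2) ∧ x₂² ≤ √(1/2)}`. -/
noncomputable def K2 : ℝ :=
  (MeasureTheory.volume {θ : ℝ | θ ∈ Set.Ico 0 (2 * π) ∧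
      Real.cos θ ^ 2 ≤ Real.sqrt (1 / 2) ∧ Real.sin θ ^ 2 ≤ Real.sqrt (1 / 2)}).toReal /
    (2 * π)

/-!
With `a = (1/2)^(1/4)`, the condition reads `cos² θ ≤ a²` and `sin² θ ≤ a²`. It is invariant
under `θ ↦ θ + π/2`, which swaps `cos²` and `sin²`, so the set of admissible angles in
`[0, 2π)` consists of four translates of its part in the first quadrant, and there it is the
interval `[arccos a, arcsin a]`. Hence `K₂ = 4 (arcsin a - arccos a) / (2π) = (4 arcsin a - π) / π`,
and the constant `c₂ = K₂ / (2√2)` follows by arithmetic.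
-/

open Set

theorem volume_Ico_inter_of_periodic {S : Set ℝ} {T : ℝ} (hS : Function.Periodic (· ∈ S) T)
    (hT : 0 ≤ T) (n : ℕ) : volume (Ico 0 (n * T) ∩ S) = n * volume (Ico 0 T ∩ S) := by
  induction n with
  | zero => simp
  | succ n ih =>
    have hnT : 0 ≤ (n : ℝ) * T := by positivity
    have hlow : Ico 0 ((n + 1 : ℕ) * T) ∩ S ∩ Ico 0 (n * T) = Ico 0 (n * T) ∩ S := by
      rw [inter_right_comm, Ico_inter_Ico, max_self, min_eq_right (by push_cast; nlinarith)]
    have hhigh : (Ico 0 ((n + 1 : ℕ) * T) ∩ S) \ Ico 0 (n * T) =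
        (fun x ↦ x + -(n * T)) ⁻¹' (Ico 0 T ∩ S) := by
      ext x
      have hx : x - n * T ∈ S ↔ x ∈ S := iff_of_eq (hS.sub_nat_mul_eq n)
      simp only [mem_sdiff, mem_inter_iff, mem_Ico, mem_preimage, ← sub_eq_add_neg, hx]
      push_cast
      constructor
      · rintro ⟨⟨⟨hx₀, hx₁⟩, hxS⟩, hx₂⟩
        exact ⟨⟨by linarith [not_and.1 hx₂ hx₀], by linarith⟩, hxS⟩
      · rintro ⟨⟨hx₁, hx₂⟩, hxS⟩
        exact ⟨⟨⟨by linarith, by linarith⟩, hxS⟩, fun h ↦ by linarith [h.2]⟩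
    rw [← measure_inter_add_sdiff _ measurableSet_Ico, hlow, hhigh, measure_preimage_add_right,
      ih]
    push_cast
    ring

def cosSqSinSqLe (s : ℝ) : Set ℝ := {θ | cos θ ^ 2 ≤ s ∧ sin θ ^ 2 ≤ s}

theorem periodic_mem_cosSqSinSqLe (s : ℝ) : Function.Periodic (· ∈ cosSqSinSqLe s) (π / 2) := by
  intro θ
  simp only [cosSqSinSqLe, mem_ofPred_eq, cos_add_pi_div_two, sin_add_pi_div_two, neg_sq, and_comm]

section FirstQuadrant

variable {a θ : ℝ}

theorem cos_sq_le_sq_iff_arccos_le (ha₀ : 0 ≤ a) (ha₁ : a ≤ 1) (hθ₀ : 0 ≤ θ) (hθ₁ : θ ≤ π / 2) :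
    cos θ ^ 2 ≤ a ^ 2 ↔ arccos a ≤ θ := by
  have hπ := pi_pos
  rw [pow_le_pow_iff_left₀ (cos_nonneg_of_mem_Icc ⟨by linarith, hθ₁⟩) ha₀ two_ne_zero]
  calc cos θ ≤ a ↔ cos θ ≤ cos (arccos a) := by rw [cos_arccos (by linarith) ha₁]
    _ ↔ arccos a ≤ θ :=
      strictAntiOn_cos.le_iff_ge ⟨hθ₀, by linarith⟩ ⟨arccos_nonneg a, arccos_le_pi a⟩

theorem sin_sq_le_sq_iff_le_arcsin (ha₀ : 0 ≤ a) (ha₁ : a ≤ 1) (hθ₀ : 0 ≤ θ) (hθ₁ : θ ≤ π / 2) :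
    sin θ ^ 2 ≤ a ^ 2 ↔ θ ≤ arcsin a := by
  have hπ := pi_pos
  rw [pow_le_pow_iff_left₀ (sin_nonneg_of_nonneg_of_le_pi hθ₀ (by linarith)) ha₀ two_ne_zero,
    le_arcsin_iff_sin_le ⟨by linarith, hθ₁⟩ ⟨by linarith, ha₁⟩]

end FirstQuadrant

theorem Ico_inter_cosSqSinSqLe_sq {a : ℝ} (ha₀ : 0 ≤ a) (ha₁ : a < 1) :
    Ico 0 (π / 2) ∩ cosSqSinSqLe (a ^ 2) = Icc (arccos a) (arcsin a) := by
  ext θ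
  simp only [cosSqSinSqLe, mem_inter_iff, mem_Ico, mem_ofPred_eq, mem_Icc]
  constructor
  · rintro ⟨⟨hθ₀, hθ₁⟩, hcos, hsin⟩
    exact ⟨(cos_sq_le_sq_iff_arccos_le ha₀ ha₁.le hθ₀ hθ₁.le).1 hcos,
      (sin_sq_le_sq_iff_le_arcsin ha₀ ha₁.le hθ₀ hθ₁.le).1 hsin⟩
  · rintro ⟨hθ₀, hθ₁⟩
    have hθ₀' : 0 ≤ θ := (arccos_nonneg a).trans hθ₀
    have hθ₁' : θ < π / 2 := hθ₁.trans_lt (arcsin_lt_pi_div_two.2 ha₁)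
    exact ⟨⟨hθ₀', hθ₁'⟩, (cos_sq_le_sq_iff_arccos_le ha₀ ha₁.le hθ₀' hθ₁'.le).2 hθ₀,
      (sin_sq_le_sq_iff_le_arcsin ha₀ ha₁.le hθ₀' hθ₁'.le).2 hθ₁⟩

theorem volume_Ico_two_pi_inter_cosSqSinSqLe_sq {a : ℝ} (ha₀ : 0 ≤ a) (ha₁ : a < 1) :
    volume (Ico 0 (2 * π) ∩ cosSqSinSqLe (a ^ 2)) = 4 * ENNReal.ofReal (arcsin a - arccos a) := by
  rw [show 2 * π = (4 : ℕ) * (π / 2) by push_cast; ring,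
    volume_Ico_inter_of_periodic (periodic_mem_cosSqSinSqLe _) (by positivity),
    Ico_inter_cosSqSinSqLe_sq ha₀ ha₁, Real.volume_Icc]
  norm_num

theorem sq_rpow_one_fourth_half : ((1 / 2 : ℝ) ^ ((1 : ℝ) / 4)) ^ 2 = √(1 / 2) := by
  rw [sqrt_eq_rpow, ← rpow_natCast, ← rpow_mul (by norm_num)]
  norm_num

theorem arccos_le_arcsin_rpow_one_fourth_half :
    arccos ((1 / 2 : ℝ) ^ ((1 : ℝ) / 4)) ≤ arcsin ((1 / 2 : ℝ) ^ ((1 : ℝ) / 4)) := by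
  have hsqrt : (√2 / 2) ^ 2 ≤ ((1 / 2 : ℝ) ^ ((1 : ℝ) / 4)) ^ 2 := by
    rw [sq_rpow_one_fourth_half, div_pow, sq_sqrt zero_le_two,
      le_sqrt (by norm_num) (by norm_num)]
    norm_num
  have ha : √2 / 2 ≤ (1 / 2 : ℝ) ^ ((1 : ℝ) / 4) :=
    (pow_le_pow_iff_left₀ (by positivity) (by positivity) two_ne_zero).1 hsqrt
  rw [arcsin_eq_pi_div_two_sub_arccos]
  linarith [arccos_le_pi_div_four.2 ha]

theorem K2_eq : K2 = 4 * (arcsin ((1 / 2 : ℝ) ^ ((1 : ℝ) / 4)) -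
    arccos ((1 / 2 : ℝ) ^ ((1 : ℝ) / 4))) / (2 * π) := by
  rw [K2, ← sq_rpow_one_fourth_half]
  change (volume (Ico 0 (2 * π) ∩ cosSqSinSqLe _)).toReal / _ = _
  rw [volume_Ico_two_pi_inter_cosSqSinSqLe_sq (by positivity)
      (rpow_lt_one (by norm_num) (by norm_num) (by norm_num)),
    ENNReal.toReal_mul, ENNReal.toReal_ofReal (sub_nonneg.2 arccos_le_arcsin_rpow_one_fourth_half)]
  norm_num

theorem stmt_19 :
    (2 * 2 : ℝ) ^ (((2 : ℝ) - 2) / 2) * K2 /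
        ((Nat.factorial (2 - 1) : ℝ) * (2 : ℝ) ^ ((3 : ℝ) / 2) * Real.Gamma (1 + 2 / 2)) =
      -1 / (2 * Real.sqrt 2) + (Real.sqrt 2 / π) * Real.arcsin ((1 / 2 : ℝ) ^ ((1 : ℝ) / 4)) := by
  have h2pow : (2 : ℝ) ^ ((3 : ℝ) / 2) = 2 * √2 := by
    rw [show (3 : ℝ) / 2 = 1 + 1 / 2 by norm_num, rpow_add two_pos, rpow_one, ← sqrt_eq_rpow]
  rw [h2pow, K2_eq, arccos_eq_pi_div_two_sub_arcsin]
  field_simp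
  norm_num
  ring
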